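/- arXiv:2110.11723 — 2 statements merged into one kernel-verified Lean document; each statement's English description precedes it below -/
import Mathlib

section
/- (Hessian bound for the smooth maximum.) For every integer m ≥ 1, every real β > 0, and all y, x ∈ ℝ^m, the second derivative of smax_β satisfies 0 ≤ (∇² smax_β(y))(x, x) ≤ 2β·∑_{i=1}^m x_i², where ∇² smax_β(y) denotes the second iterated Fréchet derivative of smax_β at y, applied to the pair (x, x). -/
/-!
With the softmax weights `p_i = exp (β y_i) / ∑ j, exp (β y_j)` the gradient of `smax β` is
`∑ i, p_i • proj i`, and since `p_i = exp (β (y_i - smax β y))` the chain rule gives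
`∂p_i = β p_i (proj i - ∇ smax β)`. Hence the Hessian form is `β` times the variance of `x`
under the probability vector `p`, which lies between `0` and `∑ p_i x_i² ≤ ∑ x_i²`.
-/

/-- The smooth maximum `smax_β(x) = (1/β)·ln(∑ i, exp(β·x_i))`. -/
noncomputable def smax {m : ℕ} (β : ℝ) (x : Fin m → ℝ) : ℝ :=
  (1 / β) * Real.log (∑ i, Real.exp (β * x i))

open Real Finset ContinuousLinearMap

section WeightedSums

variable {ι : Type*} (s : Finset ι) {p : ι → ℝ}

theorem sq_sum_mul_le_sum_mul_sq (hp : ∀ i ∈ s, 0 ≤ p i) (hsum : ∑ i ∈ s, p i = 1)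
    (x : ι → ℝ) : (∑ i ∈ s, p i * x i) ^ 2 ≤ ∑ i ∈ s, p i * x i ^ 2 := by
  simpa [hsum] using sum_sq_le_sum_mul_sum_of_sq_le_mul s hp
    (fun i hi => mul_nonneg (hp i hi) (sq_nonneg (x i)))
    (fun i _ => (by ring : (p i * x i) ^ 2 = p i * (p i * x i ^ 2)).le)

theorem sum_mul_sq_le_sum_sq (hp1 : ∀ i ∈ s, p i ≤ 1) (x : ι → ℝ) :
    ∑ i ∈ s, p i * x i ^ 2 ≤ ∑ i ∈ s, x i ^ 2 :=
  sum_le_sum fun i hi => mul_le_of_le_one_left (sq_nonneg _) (hp1 i hi)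

end WeightedSums

theorem sum_exp_mul_pos {m : ℕ} [NeZero m] (β : ℝ) (z : Fin m → ℝ) :
    0 < ∑ j, exp (β * z j) :=
  sum_pos (fun _ _ => exp_pos _) univ_nonempty

noncomputable def softmax {m : ℕ} (β : ℝ) (z : Fin m → ℝ) (i : Fin m) : ℝ :=
  exp (β * z i) / ∑ j, exp (β * z j)

section

variable {m : ℕ} [NeZero m]

theorem softmax_pos (β : ℝ) (z : Fin m → ℝ) (i : Fin m) : 0 < softmax β z i :=
  div_pos (exp_pos _) (sum_exp_mul_pos β z)

theorem sum_softmax (β : ℝ) (z : Fin m → ℝ) : ∑ i, softmax β z i = 1 := by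
  simp only [softmax, ← sum_div]
  exact div_self (sum_exp_mul_pos β z).ne'

theorem softmax_le_one (β : ℝ) (z : Fin m → ℝ) (i : Fin m) : softmax β z i ≤ 1 :=
  sum_softmax β z ▸ single_le_sum (fun j _ => (softmax_pos β z j).le) (mem_univ i)

variable {β : ℝ}

theorem softmax_eq_exp_smax (hβ : β ≠ 0) (z : Fin m → ℝ) (i : Fin m) :
    softmax β z i = exp (β * (z i - smax β z)) := by
  rw [mul_sub, exp_sub, smax, ← mul_assoc, mul_one_div_cancel hβ, one_mul,
    exp_log (sum_exp_mul_pos β z), softmax]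

theorem hasFDerivAt_smax (hβ : β ≠ 0) (z : Fin m → ℝ) :
    HasFDerivAt (smax β)
      (∑ i, softmax β z i • (proj i : (Fin m → ℝ) →L[ℝ] ℝ)) z := by
  have hS : HasFDerivAt (fun z : Fin m → ℝ => ∑ i, exp (β * z i))
      (∑ i, exp (β * z i) • β • proj i) z :=
    HasFDerivAt.fun_sum fun i _ => ((hasFDerivAt_apply i z).const_mul β).exp
  refine ((hS.log (sum_exp_mul_pos β z).ne').const_mul (1 / β)).congr_fderiv ?_
  simp only [smul_sum, smul_smul]
  refine sum_congr rfl fun i _ => ?_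
  rw [softmax]
  field_simp

theorem fderiv_smax (hβ : β ≠ 0) :
    fderiv ℝ (smax β) = fun z : Fin m → ℝ => ∑ i, softmax β z i • proj i :=
  funext fun z => (hasFDerivAt_smax hβ z).fderiv

theorem hasFDerivAt_softmax (hβ : β ≠ 0) (z : Fin m → ℝ) (i : Fin m) :
    HasFDerivAt (fun z => softmax β z i)
      ((β * softmax β z i) •
        ((proj i : (Fin m → ℝ) →L[ℝ] ℝ) - ∑ j, softmax β z j • proj j)) z := by
  have hfun : (fun z => softmax β z i) = fun z => exp (β * (z i - smax β z)) :=
    funext fun z => softmax_eq_exp_smax hβ z i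
  rw [hfun]
  refine (((hasFDerivAt_apply i z).sub (hasFDerivAt_smax hβ z)).const_mul β).exp.congr_fderiv ?_
  rw [smul_smul, mul_comm, softmax_eq_exp_smax hβ]
  rfl

theorem iteratedFDeriv_two_smax (hβ : β ≠ 0) (y x : Fin m → ℝ) :
    iteratedFDeriv ℝ 2 (smax β) y ![x, x] =
      β * (∑ i, softmax β y i * x i ^ 2 - (∑ i, softmax β y i * x i) ^ 2) := by
  have hD : HasFDerivAt (fderiv ℝ (smax β))
      (∑ i, ((β * softmax β y i) •
        ((proj i : (Fin m → ℝ) →L[ℝ] ℝ) - ∑ j, softmax β y j • proj j)).smulRight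
          (proj i)) y := by
    rw [fderiv_smax hβ]
    exact HasFDerivAt.fun_sum fun i _ =>
      (hasFDerivAt_softmax hβ y i).smul_const (proj i : (Fin m → ℝ) →L[ℝ] ℝ)
  rw [iteratedFDeriv_two_apply, hD.fderiv]
  simp only [Matrix.cons_val_zero, Matrix.cons_val_one, _root_.sum_apply, smulRight_apply,
    smul_apply, sub_apply, proj_apply, smul_eq_mul]
  rw [sq, sum_mul, ← sum_sub_distrib, mul_sum]
  exact sum_congr rfl fun i _ => by ring

end

/-- Hessian bound for the smooth maximum:
`0 ≤ (∇² smax_β(y))(x, x) ≤ 2β·∑ i, x_i²`. -/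
theorem smax_hessian_bound (m : ℕ) (hm : 1 ≤ m) (β : ℝ) (hβ : 0 < β)
    (y x : Fin m → ℝ) :
    0 ≤ iteratedFDeriv ℝ 2 (smax β) y ![x, x] ∧
    iteratedFDeriv ℝ 2 (smax β) y ![x, x] ≤ 2 * β * ∑ i, (x i) ^ 2 := by
  have : NeZero m := ⟨by omega⟩
  have hvar := sq_sum_mul_le_sum_mul_sq univ (fun i _ => (softmax_pos β y i).le)
    (sum_softmax β y) x
  have hsecond := sum_mul_sq_le_sum_sq univ (fun i _ => softmax_le_one β y i) x
  have hsum : 0 ≤ ∑ i, x i ^ 2 := sum_nonneg fun i _ => sq_nonneg (x i)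
  rw [iteratedFDeriv_two_smax hβ.ne' y x]
  refine ⟨mul_nonneg hβ.le (sub_nonneg.2 hvar), ?_⟩
  calc β * (∑ i, softmax β y i * x i ^ 2 - (∑ i, softmax β y i * x i) ^ 2)
      ≤ β * ∑ i, x i ^ 2 :=
        mul_le_mul_of_nonneg_left (by nlinarith [sq_nonneg (∑ i, softmax β y i * x i)]) hβ.le
    _ ≤ 2 * β * ∑ i, x i ^ 2 := by nlinarith
end

section
/- (Lemma 3.2, success branch / correctness of Algorithm 3's dual output, stated for an arbitrary preconditioner-response sequence.) Let B ∈ ℝ^{n×m} with m ≥ 1, let w : {1,…,m} → ℝ with w(e) > 0 for all e, W = diag(w), d ∈ ℝ^n, g > 0, ε > 0, α > 0, and set β := ε/(2α²). Let T ≥ 1 be an integer with T ≥ 4·ε^{−2}·α²·ln(2m), and let φ_1, …, φ_T ∈ ℝ^n be any sequence. For t = 1, …, T, let Φ_t := ∑_{s<t} φ_s (so Φ_1 = 0), let q_t ∈ ℝ^{2m} be the vector whose first m coordinates are W^{−1} B^T Φ_t and whose last m coordinates are −W^{−1} B^T Φ_t, and define p_t ∈ ℝ^m by p_t(e) := (exp(β·q_t(e))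 − exp(β·q_t(e+m)))/∑_{j=1}^{2m} exp(β·q_t(j)). Assume that for every t: ‖W^{−1} B^T φ_t‖∞ ≤ α and ⟨d − B(g·W^{−1} p_t), φ_t⟩ ≥ ε·g. Then the average φ_* := (1/T)·∑_{t=1}^T φ_t satisfies ‖W^{−1} B^T φ_*‖∞ ≤ (1/g)·⟨d, φ_*⟩. -/
/-!
Each round of the boosting loop is one step of the exponential-weights (Hedge) algorithm over the
`2m` experts `±(W⁻¹Bᵀφ_t)_e`, and the vector `p_t` is exactly the difference of the weights of
`+e` and `-e`. Hoeffding's lemma bounds the growth of the log-potential per step, which yields the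
regret bound `|∑_t (W⁻¹Bᵀφ_t)_e| ≤ ∑_t ⟨p_t, W⁻¹Bᵀφ_t⟩ + εT` for the chosen `β` and `T`. By
duality `⟨B W⁻¹ p_t, φ_t⟩ = ⟨p_t, W⁻¹Bᵀφ_t⟩`, the success condition reads
`⟨d, φ_t⟩ ≥ εg + g⟨p_t, W⁻¹Bᵀφ_t⟩`; summing over `t` and dividing by `gT` gives the claim.
-/

open Finset Real MeasureTheory

section Hedge

variable {ι : Type*} [Fintype ι]

/-- Hoeffding's lemma for a finitely supported distribution `p`. -/
theorem sum_mul_exp_le_of_mem_Icc {p r : ι → ℝ} (hp : ∀ i, 0 ≤ p i) (hp1 : ∑ i, p i = 1)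
    {a b : ℝ} (hr : ∀ i, r i ∈ Set.Icc a b) (t : ℝ) :
    ∑ i, p i * exp (t * r i) ≤ exp (t * ∑ i, p i * r i + ((b - a) / 2) ^ 2 * t ^ 2 / 2) := by
  let _ : MeasurableSpace ι := ⊤
  let μ : Measure ι := ∑ i, (p i).toNNReal • Measure.dirac i
  have integral_eq (f : ι → ℝ) : ∫ i, f i ∂μ = ∑ i, p i * f i := by
    rw [integral_finsetSum_measure (fun i _ => .of_finite)]
    simp [integral_smul_nnreal_measure, NNReal.smul_def, Real.coe_toNNReal _ (hp _)]
  have : IsProbabilityMeasure μ := ⟨by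
    simp only [μ, Measure.coe_finsetSum, Finset.sum_apply, Measure.smul_apply, measure_univ]
    simp [ENNReal.smul_def, ← ENNReal.ofNNReal_finsetSum,
      ← Real.toNNReal_sum_of_nonneg (fun i _ => hp i), hp1]⟩
  have h := (ProbabilityTheory.hasSubgaussianMGF_of_mem_Icc (X := r) (μ := μ)
    (measurable_of_finite r).aemeasurable (ae_of_all _ hr)).mgf_le t
  simp only [ProbabilityTheory.mgf, integral_eq, mul_sub, exp_sub, ← mul_div_assoc,
    ← Finset.sum_div] at h
  rw [div_le_iff₀ (exp_pos _), ← exp_add] at h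
  have hc : (((‖b - a‖₊ / 2) ^ 2 : NNReal) : ℝ) = ((b - a) / 2) ^ 2 := by
    push_cast
    rw [Real.norm_eq_abs, div_pow, sq_abs, div_pow]
  rwa [hc, add_comm] at h

noncomputable def hedgeWeight (β : ℝ) (L : ι → ℝ) (i : ι) : ℝ :=
  exp (β * L i) / ∑ j, exp (β * L j)

theorem sum_exp_pos [Nonempty ι] (f : ι → ℝ) : 0 < ∑ i, exp (f i) :=
  sum_pos (fun _ _ => exp_pos _) univ_nonempty

theorem hedgeWeight_pos [Nonempty ι] (β : ℝ) (L : ι → ℝ) (i : ι) : 0 < hedgeWeight β L i :=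
  div_pos (exp_pos _) (sum_exp_pos _)

theorem sum_hedgeWeight [Nonempty ι] (β : ℝ) (L : ι → ℝ) : ∑ i, hedgeWeight β L i = 1 := by
  simp only [hedgeWeight, ← sum_div]
  exact div_self (sum_exp_pos _).ne'

theorem log_sum_exp_add_le [Nonempty ι] (β : ℝ) (L : ι → ℝ) {ℓ : ι → ℝ} {a : ℝ}
    (hℓ : ∀ i, |ℓ i| ≤ a) :
    log (∑ i, exp (β * (L i + ℓ i))) ≤
      log (∑ i, exp (β * L i)) + (β * ∑ i, hedgeWeight β L i * ℓ i + β ^ 2 * a ^ 2 / 2) := by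
  have hsplit : ∑ i, exp (β * (L i + ℓ i)) =
      (∑ i, exp (β * L i)) * ∑ i, hedgeWeight β L i * exp (β * ℓ i) := by
    simp only [hedgeWeight, mul_sum, mul_add, exp_add]
    refine sum_congr rfl fun i _ => ?_
    field_simp
  have hoeffding := sum_mul_exp_le_of_mem_Icc (fun i => (hedgeWeight_pos β L i).le)
    (sum_hedgeWeight β L) (fun i => abs_le.mp (hℓ i)) β
  have hmix : 0 < ∑ i, hedgeWeight β L i * exp (β * ℓ i) :=
    sum_pos (fun i _ => mul_pos (hedgeWeight_pos β L i) (exp_pos _)) univ_nonempty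
  rw [hsplit, log_mul (sum_exp_pos _).ne' hmix.ne', add_le_add_iff_left, ← log_exp (_ + _)]
  refine log_le_log hmix (hoeffding.trans_eq ?_)
  ring_nf

theorem hedge_regret (β : ℝ) (ℓ : ℕ → ι → ℝ) {a : ℝ} (T : ℕ)
    (hℓ : ∀ k < T, ∀ i, |ℓ k i| ≤ a) (j : ι) :
    β * ∑ k ∈ range T, ℓ k j ≤ log (Fintype.card ι) +
      (β * ∑ k ∈ range T, ∑ i, hedgeWeight β (∑ s ∈ range k, ℓ s) i * ℓ k i
        + T * (β ^ 2 * a ^ 2 / 2)) := by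
  have : Nonempty ι := ⟨j⟩
  let logPotential : ℕ → ℝ := fun k => log (∑ i, exp (β * (∑ s ∈ range k, ℓ s) i))
  have hstart : logPotential 0 = log (Fintype.card ι) := by simp [logPotential]
  have hend : β * ∑ k ∈ range T, ℓ k j ≤ logPotential T := by
    rw [← log_exp (β * _), ← Finset.sum_apply]
    exact log_le_log (exp_pos _) (single_le_sum (f := fun i => exp (β * (∑ s ∈ range T, ℓ s) i))
      (fun _ _ => (exp_pos _).le) (mem_univ j))
  have hstep : ∀ k ∈ range T, logPotential (k + 1) - logPotential k ≤
      β * ∑ i, hedgeWeight β (∑ s ∈ range k, ℓ s) i * ℓ k i + β ^ 2 * a ^ 2 / 2 := by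
    intro k hk
    rw [sub_le_iff_le_add']
    simpa only [logPotential, sum_range_succ, Pi.add_apply] using
      log_sum_exp_add_le β (∑ s ∈ range k, ℓ s) (hℓ k (mem_range.mp hk))
  have htelescope := sum_le_sum hstep
  rw [sum_range_sub, sum_add_distrib, ← mul_sum, sum_const, card_range, nsmul_eq_mul]
    at htelescope
  linarith

end Hedge

theorem sum_filter_lt_eq_sum_range {M : Type*} [AddCommMonoid M] {T : ℕ} (f : ℕ → M)
    (t : Fin T) : ∑ s ∈ univ.filter (fun s => s < t), f s = ∑ k ∈ range t, f k := by
  rw [filter_gt_eq_Iio, ← Nat.Iio_eq_range, ← Fin.map_valEmbedding_Iio, sum_map]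
  rfl

section SignedExperts

variable {m : ℕ}

/-- Hedge over the `2m` experts `±x e` induces the signed weights `p_t` of the paper. -/
noncomputable def signedHedgeWeight (β : ℝ) (L : Fin (m + m) → ℝ) (e : Fin m) : ℝ :=
  hedgeWeight β L (Fin.castAdd m e) - hedgeWeight β L (Fin.natAdd m e)

theorem sum_hedgeWeight_mul_append_neg (β : ℝ) (L : Fin (m + m) → ℝ) (x : Fin m → ℝ) :
    ∑ j, hedgeWeight β L j * Fin.append x (-x) j = ∑ e, signedHedgeWeight β L e * x e := by
  rw [Fin.sum_univ_add]
  simp only [Fin.append_left, Fin.append_right, Pi.neg_apply, signedHedgeWeight,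
    ← sum_add_distrib]
  refine sum_congr rfl fun e _ => ?_
  ring

theorem abs_append_neg_le {x : Fin m → ℝ} {a : ℝ} (hx : ∀ e, |x e| ≤ a) (j : Fin (m + m)) :
    |Fin.append x (-x) j| ≤ a := by
  refine Fin.addCases (fun e => ?_) (fun e => ?_) j
  · simpa only [Fin.append_left] using hx e
  · simpa only [Fin.append_right, Pi.neg_apply, abs_neg] using hx e

theorem signed_hedge_regret (β : ℝ) (x : ℕ → Fin m → ℝ) {a : ℝ} (T : ℕ)
    (hx : ∀ k < T, ∀ e, |x k e| ≤ a) (e : Fin m) :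
    |β * ∑ k ∈ range T, x k e| ≤ log (2 * m) +
      (β * ∑ k ∈ range T, ∑ e', signedHedgeWeight β (∑ s ∈ range k, Fin.append (x s) (-x s)) e'
          * x k e' + T * (β ^ 2 * a ^ 2 / 2)) := by
  have regret (j : Fin (m + m)) := hedge_regret β (fun k => Fin.append (x k) (-x k)) T
    (fun k hk => abs_append_neg_le (hx k hk)) j
  simp only [sum_hedgeWeight_mul_append_neg, Fintype.card_fin, ← two_mul, Nat.cast_mul,
    Nat.cast_ofNat] at regret
  have h₁ := regret (Fin.castAdd m e)
  have h₂ := regret (Fin.natAdd m e)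
  simp only [Fin.append_left, Fin.append_right, Pi.neg_apply, sum_neg_distrib] at h₁ h₂
  rw [abs_le]
  constructor <;> linarith

theorem signed_hedge_regret_fin {T : ℕ} (β : ℝ) (x : Fin T → Fin m → ℝ) {a : ℝ}
    (hx : ∀ t e, |x t e| ≤ a) (q : Fin T → Fin (m + m) → ℝ)
    (hq : ∀ t e, q t (Fin.castAdd m e) = ∑ s ∈ univ.filter (fun s => s < t), x s e ∧
      q t (Fin.natAdd m e) = -∑ s ∈ univ.filter (fun s => s < t), x s e) (e : Fin m) :
    |β * ∑ t, x t e| ≤ log (2 * m) +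
      (β * ∑ t, ∑ e', signedHedgeWeight β (q t) e' * x t e' + T * (β ^ 2 * a ^ 2 / 2)) := by
  let y : ℕ → Fin m → ℝ := fun k => if h : k < T then x ⟨k, h⟩ else 0
  have hy (t : Fin T) : y t = x t := dif_pos t.isLt
  have hqy (t : Fin T) : q t = ∑ k ∈ range t, Fin.append (y k) (-y k) := by
    funext j
    refine Fin.addCases (fun e => ?_) (fun e => ?_) j
    · simp only [(hq t e).1, ← sum_filter_lt_eq_sum_range, Finset.sum_apply, Fin.append_left, hy]
    · simp only [(hq t e).2, ← sum_filter_lt_eq_sum_range, Finset.sum_apply, Fin.append_right,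
        Pi.neg_apply, hy, sum_neg_distrib]
  have h := signed_hedge_regret β y T (fun k hk => hy ⟨k, hk⟩ ▸ hx ⟨k, hk⟩) e
  rw [← Fin.sum_univ_eq_sum_range (y · e), ← Fin.sum_univ_eq_sum_range
    (fun k => ∑ e', signedHedgeWeight β (∑ s ∈ range k, Fin.append (y s) (-y s)) e' * y k e')] at h
  simpa only [hy, ← hqy] using h

end SignedExperts

theorem step_size_bound {ε α β L T : ℝ} (hε : 0 < ε) (hα : 0 < α) (hL : 0 ≤ L)
    (hβ : β = ε / (2 * α ^ 2)) (hT : 4 * ε⁻¹ ^ 2 * α ^ 2 * L ≤ T) :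
    L + T * (β ^ 2 * α ^ 2 / 2) ≤ β * (T * ε) := by
  have hT' : 4 * α ^ 2 * L ≤ T * ε ^ 2 :=
    calc 4 * α ^ 2 * L = 4 * ε⁻¹ ^ 2 * α ^ 2 * L * ε ^ 2 := by field_simp
      _ ≤ T * ε ^ 2 := by gcongr
  have hgap : β * (T * ε) - (L + T * (β ^ 2 * α ^ 2 / 2))
      = (3 * (T * ε ^ 2) - 8 * α ^ 2 * L) / (8 * α ^ 2) := by
    subst hβ
    field_simp
    ring
  have : 0 ≤ (3 * (T * ε ^ 2) - 8 * α ^ 2 * L) / (8 * α ^ 2) :=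
    div_nonneg (by nlinarith [mul_nonneg (sq_nonneg α) hL]) (by positivity)
  linarith

theorem abs_sum_le_sum_signedHedgeWeight_mul_add {m T : ℕ} {ε α β : ℝ} (hε : 0 < ε)
    (hα : 0 < α) (hβ : β = ε / (2 * α ^ 2)) (hT : 4 * ε⁻¹ ^ 2 * α ^ 2 * log (2 * m) ≤ T)
    (x : Fin T → Fin m → ℝ) (hx : ∀ t e, |x t e| ≤ α) (q : Fin T → Fin (m + m) → ℝ)
    (hq : ∀ t e, q t (Fin.castAdd m e) = ∑ s ∈ univ.filter (fun s => s < t), x s e ∧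
      q t (Fin.natAdd m e) = -∑ s ∈ univ.filter (fun s => s < t), x s e) (e : Fin m) :
    |∑ t, x t e| ≤ ∑ t, ∑ e', signedHedgeWeight β (q t) e' * x t e' + T * ε := by
  have hβ0 : 0 < β := hβ ▸ by positivity
  have hregret := signed_hedge_regret_fin β x hx q hq e
  have hstep := step_size_bound hε hα (by exact_mod_cast log_natCast_nonneg (2 * m)) hβ hT
  rw [abs_mul, abs_of_pos hβ0] at hregret
  refine le_of_mul_le_mul_left ?_ hβ0
  linarith

section WeightedTranspose

variable {V E : Type*} [Fintype V] [Fintype E] [DecidableEq E]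

/-- The operator `W⁻¹ Bᵀ` for `W = diag w`. -/
noncomputable def weightedTranspose (B : Matrix V E ℝ) (w : E → ℝ) : (V → ℝ) →ₗ[ℝ] E → ℝ :=
  (Matrix.diagonal w⁻¹ * B.transpose).mulVecLin

theorem weightedTranspose_apply (B : Matrix V E ℝ) (w : E → ℝ) (ψ : V → ℝ) (e : E) :
    weightedTranspose B w ψ e = B.transpose.mulVec ψ e / w e := by
  simp [weightedTranspose, Matrix.mulVec_diagonal, div_eq_inv_mul, Matrix.mulVec_transpose]

theorem sum_sub_mulVec_mul (B : Matrix V E ℝ) (w : E → ℝ) (d ψ : V → ℝ) (c : ℝ) (x : E → ℝ) :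
    ∑ v, (d - B.mulVec fun e => c * x e / w e) v * ψ v =
      ∑ v, d v * ψ v - c * ∑ e, x e * weightedTranspose B w ψ e := by
  simp only [Pi.sub_apply, sub_mul, sum_sub_distrib, weightedTranspose_apply, Matrix.mulVec,
    dotProduct, Matrix.transpose_apply, sum_mul, sum_div, mul_sum]
  rw [sum_comm]
  congr 1
  refine sum_congr rfl fun e _ => sum_congr rfl fun v _ => ?_
  ring

theorem mul_sum_add_le_of_success (B : Matrix V E ℝ) (w : E → ℝ) (d : V → ℝ) {g ε : ℝ} {T : ℕ}
    (φ : Fin T → V → ℝ) (p : Fin T → E → ℝ)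
    (hsuccess : ∀ t, ε * g ≤ ∑ v, (d - B.mulVec fun e => g * p t e / w e) v * φ t v) :
    g * (∑ t, ∑ e, p t e * weightedTranspose B w (φ t) e + T * ε) ≤ ∑ t, ∑ v, d v * φ t v :=
  calc g * (∑ t, ∑ e, p t e * weightedTranspose B w (φ t) e + T * ε)
      = ∑ t, (ε * g + g * ∑ e, p t e * weightedTranspose B w (φ t) e) := by
        rw [sum_add_distrib, sum_const, card_univ, Fintype.card_fin, nsmul_eq_mul, ← mul_sum]
        ring
    _ ≤ ∑ t, ∑ v, d v * φ t v := sum_le_sum fun t _ => by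
        linarith [sum_sub_mulVec_mul B w d (φ t) g (p t) ▸ hsuccess t]

end WeightedTranspose

theorem boosting_success_branch_general (n m : ℕ) (hm : 1 ≤ m)
    (B : Matrix (Fin n) (Fin m) ℝ) (w : Fin m → ℝ)
    (d : Fin n → ℝ) (g ε α : ℝ) (hg : 0 < g) (hε : 0 < ε) (hα : 0 < α)
    (β : ℝ) (hβ : β = ε / (2 * α ^ 2))
    (T : ℕ)
    (hT : 4 * ε⁻¹ ^ 2 * α ^ 2 * Real.log (2 * m) ≤ (T : ℝ))
    (φ : Fin T → Fin n → ℝ)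
    (Φ : Fin T → Fin n → ℝ)
    (hΦ : ∀ t, Φ t = ∑ s ∈ Finset.univ.filter (fun s => s < t), φ s)
    (q : Fin T → Fin (m + m) → ℝ)
    (hq : ∀ t (e : Fin m),
      q t (Fin.castAdd m e) = B.transpose.mulVec (Φ t) e / w e ∧
      q t (Fin.natAdd m e) = -(B.transpose.mulVec (Φ t) e / w e))
    (p : Fin T → Fin m → ℝ)
    (hp : ∀ t (e : Fin m), p t e =
      (Real.exp (β * q t (Fin.castAdd m e)) - Real.exp (β * q t (Fin.natAdd m e)))
        / ∑ j, Real.exp (β * q t j))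
    (hwidth : ∀ t, ‖(fun e => B.transpose.mulVec (φ t) e / w e)‖ ≤ α)
    (hsuccess : ∀ t,
      ε * g ≤ ∑ v, (d - B.mulVec (fun e => g * p t e / w e)) v * φ t v)
    (φstar : Fin n → ℝ) (hφstar : φstar = (T : ℝ)⁻¹ • ∑ t, φ t) :
    ‖(fun e => B.transpose.mulVec φstar e / w e)‖ ≤
      (1 / g) * ∑ v, d v * φstar v := by
  simp only [← weightedTranspose_apply] at hq hwidth ⊢
  set u := weightedTranspose B w
  have hp' (t : Fin T) : p t = signedHedgeWeight β (q t) :=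
    funext fun e => by rw [hp, sub_div]; rfl
  have hregret (e : Fin m) :
      |u (∑ t, φ t) e| ≤ ∑ t, ∑ e', p t e' * u (φ t) e' + T * ε := by
    have h := abs_sum_le_sum_signedHedgeWeight_mul_add hε hα hβ hT (fun t => u (φ t))
      (fun t e => (norm_le_pi_norm (u (φ t)) e).trans (hwidth t)) q
      (fun t e => by simpa only [hΦ, map_sum, Finset.sum_apply] using hq t e) e
    simpa only [map_sum, Finset.sum_apply, hp'] using h
  have hsuccess_sum := mul_sum_add_le_of_success B w d φ p hsuccess
  have havg : ∑ v, d v * φstar v = (T : ℝ)⁻¹ * ∑ t, ∑ v, d v * φ t v := by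
    change d ⬝ᵥ φstar = _
    rw [hφstar, dotProduct_smul, dotProduct_sum, smul_eq_mul]
    rfl
  have : Nonempty (Fin m) := ⟨⟨0, hm⟩⟩
  refine (pi_norm_le_iff_of_nonempty _).2 fun e => ?_
  rw [havg, hφstar, map_smul, Pi.smul_apply, smul_eq_mul, Real.norm_eq_abs, abs_mul, abs_inv,
    Nat.abs_cast, mul_left_comm]
  gcongr
  rw [one_div, le_inv_mul_iff₀ hg]
  exact (mul_le_mul_of_nonneg_left (hregret e) hg.le).trans hsuccess_sum

/-- Lemma 3.2, success branch / correctness of Algorithm 3's dual output,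
stated for an arbitrary preconditioner-response sequence. The ℓ∞-norm on
`Fin m → ℝ` is the sup norm; `W⁻¹Bᵀψ` is the vector `e ↦ (Bᵀψ)_e / w_e`. -/
theorem boosting_success_branch (n m : ℕ) (hm : 1 ≤ m)
    (B : Matrix (Fin n) (Fin m) ℝ) (w : Fin m → ℝ) (hw : ∀ e, 0 < w e)
    (d : Fin n → ℝ) (g ε α : ℝ) (hg : 0 < g) (hε : 0 < ε) (hα : 0 < α)
    (β : ℝ) (hβ : β = ε / (2 * α ^ 2))
    (T : ℕ) (hT1 : 1 ≤ T)
    (hT : 4 * ε⁻¹ ^ 2 * α ^ 2 * Real.log (2 * m) ≤ (T : ℝ))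
    (φ : Fin T → Fin n → ℝ)
    (Φ : Fin T → Fin n → ℝ)
    (hΦ : ∀ t, Φ t = ∑ s ∈ Finset.univ.filter (fun s => s < t), φ s)
    (q : Fin T → Fin (m + m) → ℝ)
    (hq : ∀ t (e : Fin m),
      q t (Fin.castAdd m e) = B.transpose.mulVec (Φ t) e / w e ∧
      q t (Fin.natAdd m e) = -(B.transpose.mulVec (Φ t) e / w e))
    (p : Fin T → Fin m → ℝ)
    (hp : ∀ t (e : Fin m), p t e =
      (Real.exp (β * q t (Fin.castAdd m e)) - Real.exp (β * q t (Fin.natAdd m e)))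
        / ∑ j, Real.exp (β * q t j))
    (hwidth : ∀ t, ‖(fun e => B.transpose.mulVec (φ t) e / w e)‖ ≤ α)
    (hsuccess : ∀ t,
      ε * g ≤ ∑ v, (d - B.mulVec (fun e => g * p t e / w e)) v * φ t v)
    (φstar : Fin n → ℝ) (hφstar : φstar = (T : ℝ)⁻¹ • ∑ t, φ t) :
    ‖(fun e => B.transpose.mulVec φstar e / w e)‖ ≤
      (1 / g) * ∑ v, d v * φstar v :=
  boosting_success_branch_general n m hm B w d g ε α hg hε hα β hβ T hT φ Φ hΦ q hq p hp hwidth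
    hsuccess φstar hφstar
end
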